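/- arXiv:1605.04851 — 2 statements merged into one kernel-verified Lean document; each statement's English description precedes it below -/
import Mathlib

section
/- Fix γ ∈ (0, D*] and λ₁, λ₂ ∈ [0,1] with D(P^(λ₁)‖P₂) = γ and D(P^(λ₂)‖P₁) = γ, and set α = D(P^(λ₂)‖P₂) − D(P^(λ₂)‖P₁) and β = D(P^(λ₁)‖P₂) − D(P^(λ₁)‖P₁). Consider the fixed-length test with rejection at blocklength n that chooses H₁ if (1/n)Σ_{i=1}^n log(P₁(X_i)/P₂(X_i)) ≥ α, chooses H₂ if (1/n)Σ_{i=1}^n log(P₁(X_i)/P₂(X_i)) ≤ β, and rejects both hypotheses otherwise. Then for every n ≥ 1 this test satisfies P₁(A₂^n) ≤ e^{−n·D(P^(λ₁)‖P₁)}, P₂(A₁^n) ≤ e^{−n·D(P^(λ₂)‖P₂)}, P₁(A_Ω^n) ≤ e^{−γn}, and P₂(A_Ω^n) ≤ e^{−γn}. -/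
open Real Filter Finset MeasureTheory
open scoped Classical

variable {𝒳 : Type*} [Fintype 𝒳] [DecidableEq 𝒳] [Nonempty 𝒳]

/-- Kullback–Leibler divergence `D(Q‖P)` between pmfs on a finite alphabet. -/
noncomputable def kl (Q P : 𝒳 → ℝ) : ℝ :=
  ∑ x, Q x * Real.log (Q x / P x)

/-- The `λ`-tilted distribution `P^(λ)` of `P₁` and `P₂`. -/
noncomputable def tilt (P₁ P₂ : 𝒳 → ℝ) (l : ℝ) : 𝒳 → ℝ :=
  fun x => P₁ x ^ (1 - l) * P₂ x ^ l / ∑ a, P₁ a ^ (1 - l) * P₂ a ^ l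

/-- Probability of a set of length-`N` sample paths under i.i.d. sampling from `P`. -/
noncomputable def prodProb (P : 𝒳 → ℝ) {N : ℕ} (S : Set (Fin N → 𝒳)) : ℝ :=
  ∑ ω : Fin N → 𝒳, S.indicator (fun ω' => ∏ i, P (ω' i)) ω

/-- The fixed-length error-exponent region `R_FD`. -/
def RFD (P₁ P₂ : 𝒳 → ℝ) : Set (ℝ × ℝ) :=
  {p | 0 ≤ p.1 ∧ 0 ≤ p.2 ∧
    ∃ l ∈ Set.Icc (0:ℝ) 1,
      p.1 ≤ kl (tilt P₁ P₂ l) P₁ ∧ p.2 ≤ kl (tilt P₁ P₂ l) P₂}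

/-- `E₁(γ) = max{D(P^(λ)‖P₁) : λ ∈ [0,1], D(P^(λ)‖P₂) ≥ γ}` (sup of the empty set is 0). -/
noncomputable def E1exp (P₁ P₂ : 𝒳 → ℝ) (γ : ℝ) : ℝ :=
  sSup {E | ∃ l ∈ Set.Icc (0:ℝ) 1, γ ≤ kl (tilt P₁ P₂ l) P₂ ∧ E = kl (tilt P₁ P₂ l) P₁}

/-- `E₂(γ) = max{D(P^(λ)‖P₂) : λ ∈ [0,1], D(P^(λ)‖P₁) ≥ γ}` (sup of the empty set is 0). -/
noncomputable def E2exp (P₁ P₂ : 𝒳 → ℝ) (γ : ℝ) : ℝ :=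
  sSup {E | ∃ l ∈ Set.Icc (0:ℝ) 1, γ ≤ kl (tilt P₁ P₂ l) P₁ ∧ E = kl (tilt P₁ P₂ l) P₂}

/-- A sequential hypothesis test whose stopping time is bounded by `N`:
a stopping time `τ` for the coordinate filtration, together with decision events
`A1`, `A2` that are determined by the samples observed up to time `τ`,
are disjoint, and exhaust the sample space. -/
structure HypTest (𝒳 : Type*) (N : ℕ) where
  τ : (Fin N → 𝒳) → ℕ
  A1 : Set (Fin N → 𝒳)
  A2 : Set (Fin N → 𝒳)
  tau_le : ∀ ω, τ ω ≤ N
  stopping : ∀ ω ω', (∀ i : Fin N, (i : ℕ) < τ ω → ω i = ω' i) → τ ω' = τ ω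
  adapted1 : ∀ ω ω', (∀ i : Fin N, (i : ℕ) < τ ω → ω i = ω' i) → (ω ∈ A1 ↔ ω' ∈ A1)
  adapted2 : ∀ ω ω', (∀ i : Fin N, (i : ℕ) < τ ω → ω i = ω' i) → (ω ∈ A2 ↔ ω' ∈ A2)
  disj : Disjoint A1 A2
  exhaust : A1 ∪ A2 = Set.univ

/-- `(E₁, E₂)` is achievable by `γ`-almost-fixed-length tests. -/
def AFLAchievable (P₁ P₂ : 𝒳 → ℝ) (γ E₁ E₂ : ℝ) : Prop :=
  0 ≤ E₁ ∧ 0 ≤ E₂ ∧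
  ∃ c : ℝ, 0 < c ∧ ∃ l : ℕ, 0 < l ∧
    ∀ δ : ℝ, 0 < δ → ∃ n₀ : ℕ, ∀ n : ℕ, n₀ ≤ n →
      ∃ N : ℕ, (N : ℝ) ≤ c * (n : ℝ) ^ l ∧
        ∃ T : HypTest 𝒳 N,
          prodProb P₁ {ω | n < T.τ ω} ≤ Real.exp (-(γ * n)) ∧
          prodProb P₂ {ω | n < T.τ ω} ≤ Real.exp (-(γ * n)) ∧
          prodProb P₁ T.A2 ≤ Real.exp (-((E₁ - δ) * n)) ∧
          prodProb P₂ T.A1 ≤ Real.exp (-((E₂ - δ) * n))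

/-- `(E₁, E₂, E_Ω)` is achievable by fixed-length tests with a rejection option. -/
def RejAchievable (P₁ P₂ : 𝒳 → ℝ) (E₁ E₂ EΩ : ℝ) : Prop :=
  0 ≤ E₁ ∧ 0 ≤ E₂ ∧ 0 ≤ EΩ ∧
  ∀ δ : ℝ, 0 < δ → ∃ n₀ : ℕ, ∀ n : ℕ, n₀ ≤ n →
    ∃ A1 A2 AΩ : Set (Fin n → 𝒳),
      Disjoint A1 A2 ∧ Disjoint A1 AΩ ∧ Disjoint A2 AΩ ∧ A1 ∪ A2 ∪ AΩ = Set.univ ∧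
      prodProb P₁ A2 ≤ Real.exp (-((E₁ - δ) * n)) ∧
      prodProb P₂ A1 ≤ Real.exp (-((E₂ - δ) * n)) ∧
      prodProb P₁ AΩ + prodProb P₂ AΩ ≤ Real.exp (-((EΩ - δ) * n))

/-- Sum of the log-likelihood ratios of the first `n` samples. -/
noncomputable def S1 (P₁ P₂ : 𝒳 → ℝ) (n : ℕ) {N : ℕ} (ω : Fin N → 𝒳) : ℝ :=
  ∑ i ∈ Finset.univ.filter (fun i : Fin N => (i : ℕ) < n),
    Real.log (P₁ (ω i) / P₂ (ω i))

/-- Sum of the log-likelihood ratios of the samples after time `n`. -/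
noncomputable def S2 (P₁ P₂ : 𝒳 → ℝ) (n : ℕ) {N : ℕ} (ω : Fin N → 𝒳) : ℝ :=
  ∑ i ∈ Finset.univ.filter (fun i : Fin N => n ≤ (i : ℕ)),
    Real.log (P₁ (ω i) / P₂ (ω i))

/-- Event that the two-phase test (phase-one thresholds `α₁ > β₁`, phase-two threshold `α`)
chooses `H₁`. -/
def twoPhaseA1 (P₁ P₂ : 𝒳 → ℝ) (k n : ℕ) (α₁ β₁ α : ℝ) : Set (Fin ((k + 1) * n) → 𝒳) :=
  {ω | α₁ ≤ S1 P₁ P₂ n ω / n ∨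
    (β₁ < S1 P₁ P₂ n ω / n ∧ S1 P₁ P₂ n ω / n < α₁ ∧ α ≤ S2 P₁ P₂ n ω / (k * n))}

/-- Event that the two-phase test chooses `H₂`. -/
def twoPhaseA2 (P₁ P₂ : 𝒳 → ℝ) (k n : ℕ) (α₁ β₁ α : ℝ) : Set (Fin ((k + 1) * n) → 𝒳) :=
  {ω | S1 P₁ P₂ n ω / n ≤ β₁ ∨
    (β₁ < S1 P₁ P₂ n ω / n ∧ S1 P₁ P₂ n ω / n < α₁ ∧ S2 P₁ P₂ n ω / (k * n) < α)}

/-- Stopping time of the two-phase test: `n` if phase one is decisive, `(k+1)n` otherwise. -/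
noncomputable def twoPhaseTau (P₁ P₂ : 𝒳 → ℝ) (k n : ℕ) (α₁ β₁ : ℝ)
    (ω : Fin ((k + 1) * n) → 𝒳) : ℕ :=
  if β₁ < S1 P₁ P₂ n ω / n ∧ S1 P₁ P₂ n ω / n < α₁ then (k + 1) * n else n

/-! Each error probability is a Chernoff bound for the i.i.d. sum of log-likelihood ratios
`L = log (P₁ / P₂)`. For `λ ∈ [0, 1]` the moment generating functions of `-λ L` under `P₁` and
of `(1 - λ) L` under `P₂` both equal the normaliser `Z(λ) = ∑ P₁^(1-λ) P₂^λ` of the tilted law,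
and the identity `(1 - λ) D(P^(λ)‖P₁) + λ D(P^(λ)‖P₂) = -log Z(λ)` turns the Chernoff exponents
at the threshold `D(P^(λ)‖P₂) - D(P^(λ)‖P₁)` into `D(P^(λ)‖P₁)` and `D(P^(λ)‖P₂)`. The rejection
region lies below the threshold of `λ₂` and above that of `λ₁`, where the relevant exponents
`D(P^(λ₂)‖P₁)` and `D(P^(λ₁)‖P₂)` both equal `γ`. -/

section Chernoff

variable {α : Type*} [Fintype α]

lemma prodProb_mono {P : α → ℝ} (hP : ∀ x, 0 ≤ P x) {n : ℕ} {S T : Set (Fin n → α)}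
    (hST : S ⊆ T) : prodProb P S ≤ prodProb P T :=
  Finset.sum_le_sum fun _ _ =>
    Set.indicator_le_indicator_of_subset hST (fun _ => Finset.prod_nonneg fun _ _ => hP _) _

lemma prodProb_sum_ge_le_exp_mul_mgf_pow {P : α → ℝ} (hP : ∀ x, 0 ≤ P x) (g : α → ℝ)
    {t : ℝ} (ht : 0 ≤ t) (n : ℕ) (b : ℝ) :
    prodProb P {ω : Fin n → α | b ≤ ∑ i, g (ω i)}
      ≤ exp (-(t * b)) * (∑ x, P x * exp (t * g x)) ^ n := by
  have hpoint : ∀ ω : Fin n → α,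
      {ω : Fin n → α | b ≤ ∑ i, g (ω i)}.indicator (fun ω' => ∏ i, P (ω' i)) ω
        ≤ exp (-(t * b)) * ∏ i, P (ω i) * exp (t * g (ω i)) := by
    intro ω
    have hprod : exp (-(t * b)) * ∏ i, P (ω i) * exp (t * g (ω i))
        = exp (t * (∑ i, g (ω i) - b)) * ∏ i, P (ω i) := by
      rw [Finset.prod_mul_distrib, ← Real.exp_sum, ← Finset.mul_sum, mul_sub, sub_eq_add_neg,
        Real.exp_add]
      ring
    have hP_prod : 0 ≤ ∏ i, P (ω i) := Finset.prod_nonneg fun _ _ => hP _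
    rw [hprod]
    by_cases hω : ω ∈ {ω : Fin n → α | b ≤ ∑ i, g (ω i)}
    · rw [Set.indicator_of_mem hω]
      exact le_mul_of_one_le_left hP_prod (one_le_exp (mul_nonneg ht (sub_nonneg.2 hω)))
    · rw [Set.indicator_of_notMem hω]
      positivity
  calc prodProb P {ω : Fin n → α | b ≤ ∑ i, g (ω i)}
      ≤ ∑ ω : Fin n → α, exp (-(t * b)) * ∏ i, P (ω i) * exp (t * g (ω i)) :=
        Finset.sum_le_sum fun ω _ => hpoint ω
    _ = exp (-(t * b)) * (∑ x, P x * exp (t * g x)) ^ n := by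
        rw [← Finset.mul_sum, Finset.sum_pow', Fintype.piFinset_univ]

end Chernoff

section Tilting

variable {α : Type*} [Fintype α] {P₁ P₂ : α → ℝ}

lemma rpow_one_sub_mul_rpow_eq_mul_exp {a b : ℝ} (ha : 0 < a) (hb : 0 < b) (l : ℝ) :
    a ^ (1 - l) * b ^ l = a * exp (l * log (b / a)) := by
  calc a ^ (1 - l) * b ^ l = exp (log a + l * (log b - log a)) := by
        rw [rpow_def_of_pos ha, rpow_def_of_pos hb, ← exp_add]
        ring_nf
    _ = a * exp (l * log (b / a)) := by rw [exp_add, exp_log ha, log_div hb.ne' ha.ne']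

lemma sum_rpow_one_sub_mul_rpow_pos [Nonempty α] (h1 : ∀ x, 0 < P₁ x) (h2 : ∀ x, 0 < P₂ x)
    (l : ℝ) : 0 < ∑ a, P₁ a ^ (1 - l) * P₂ a ^ l :=
  Finset.sum_pos (fun a _ => mul_pos (rpow_pos_of_pos (h1 a) _) (rpow_pos_of_pos (h2 a) _))
    Finset.univ_nonempty

lemma tilt_pos [Nonempty α] (h1 : ∀ x, 0 < P₁ x) (h2 : ∀ x, 0 < P₂ x) (l : ℝ) (x : α) :
    0 < tilt P₁ P₂ l x :=
  div_pos (mul_pos (rpow_pos_of_pos (h1 x) _) (rpow_pos_of_pos (h2 x) _))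
    (sum_rpow_one_sub_mul_rpow_pos h1 h2 l)

lemma sum_tilt [Nonempty α] (h1 : ∀ x, 0 < P₁ x) (h2 : ∀ x, 0 < P₂ x) (l : ℝ) :
    ∑ x, tilt P₁ P₂ l x = 1 := by
  unfold tilt
  rw [← Finset.sum_div, div_self (sum_rpow_one_sub_mul_rpow_pos h1 h2 l).ne']

lemma one_sub_mul_kl_tilt_add_mul_kl_tilt [Nonempty α] (h1 : ∀ x, 0 < P₁ x)
    (h2 : ∀ x, 0 < P₂ x) (l : ℝ) :
    (1 - l) * kl (tilt P₁ P₂ l) P₁ + l * kl (tilt P₁ P₂ l) P₂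
      = -log (∑ a, P₁ a ^ (1 - l) * P₂ a ^ l) := by
  set Z := ∑ a, P₁ a ^ (1 - l) * P₂ a ^ l
  have hpoint : ∀ x, (1 - l) * (tilt P₁ P₂ l x * log (tilt P₁ P₂ l x / P₁ x))
      + l * (tilt P₁ P₂ l x * log (tilt P₁ P₂ l x / P₂ x)) = tilt P₁ P₂ l x * -log Z := by
    intro x
    have hlog : log (tilt P₁ P₂ l x) = (1 - l) * log (P₁ x) + l * log (P₂ x) - log Z := by
      change log (P₁ x ^ (1 - l) * P₂ x ^ l / Z) = _
      rw [log_div (mul_pos (rpow_pos_of_pos (h1 x) _) (rpow_pos_of_pos (h2 x) _)).ne'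
          (sum_rpow_one_sub_mul_rpow_pos h1 h2 l).ne',
        log_mul (rpow_pos_of_pos (h1 x) _).ne' (rpow_pos_of_pos (h2 x) _).ne',
        log_rpow (h1 x), log_rpow (h2 x)]
    have hQ := (tilt_pos h1 h2 l x).ne'
    rw [log_div hQ (h1 x).ne', log_div hQ (h2 x).ne', hlog]
    ring
  unfold kl
  rw [Finset.mul_sum, Finset.mul_sum, ← Finset.sum_add_distrib,
    Finset.sum_congr rfl fun x _ => hpoint x, ← Finset.sum_mul, sum_tilt h1 h2, one_mul]

end Tilting

lemma S1_of_fin_self {α : Type*} (P₁ P₂ : α → ℝ) (n : ℕ) (ω : Fin n → α) :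
    S1 P₁ P₂ n ω = ∑ i, log (P₁ (ω i) / P₂ (ω i)) := by
  rw [S1, Finset.filter_true_of_mem fun i _ => i.isLt]

section LikelihoodRatioTest

variable {α : Type*} [Fintype α] [Nonempty α] {P₁ P₂ : α → ℝ}

lemma prodProb_S1_div_le_le_exp_neg_kl_tilt (h1 : ∀ x, 0 < P₁ x) (h2 : ∀ x, 0 < P₂ x)
    {l : ℝ} (hl : 0 ≤ l) {n : ℕ} (hn : 0 < n) :
    prodProb P₁ {ω : Fin n → α |
        S1 P₁ P₂ n ω / n ≤ kl (tilt P₁ P₂ l) P₂ - kl (tilt P₁ P₂ l) P₁}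
      ≤ exp (-(n * kl (tilt P₁ P₂ l) P₁)) := by
  set D₁ := kl (tilt P₁ P₂ l) P₁
  set D₂ := kl (tilt P₁ P₂ l) P₂
  set Z := ∑ a, P₁ a ^ (1 - l) * P₂ a ^ l
  have hZ : 0 < Z := sum_rpow_one_sub_mul_rpow_pos h1 h2 l
  have hset : {ω : Fin n → α | S1 P₁ P₂ n ω / n ≤ D₂ - D₁}
      = {ω | -(n * (D₂ - D₁)) ≤ ∑ i, -log (P₁ (ω i) / P₂ (ω i))} := by
    ext ω
    rw [Set.mem_ofPred_eq, Set.mem_ofPred_eq, S1_of_fin_self, Finset.sum_neg_distrib,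
      neg_le_neg_iff, div_le_iff₀ (Nat.cast_pos.2 hn), mul_comm]
  have hmgf : ∑ x, P₁ x * exp (l * -log (P₁ x / P₂ x)) = Z :=
    Finset.sum_congr rfl fun x _ => by
      rw [← log_inv, inv_div, rpow_one_sub_mul_rpow_eq_mul_exp (h1 x) (h2 x)]
  rw [hset]
  calc _ ≤ exp (-(l * -(n * (D₂ - D₁)))) * (∑ x, P₁ x * exp (l * -log (P₁ x / P₂ x))) ^ n :=
        prodProb_sum_ge_le_exp_mul_mgf_pow (fun x => (h1 x).le) _ hl n _
    _ = exp (-(n * D₁)) := by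
        rw [hmgf, ← exp_log hZ, ← exp_nat_mul, ← exp_add]
        congr 1
        linear_combination (n : ℝ) * one_sub_mul_kl_tilt_add_mul_kl_tilt h1 h2 l

lemma prodProb_le_S1_div_le_exp_neg_kl_tilt (h1 : ∀ x, 0 < P₁ x) (h2 : ∀ x, 0 < P₂ x)
    {l : ℝ} (hl : l ≤ 1) {n : ℕ} (hn : 0 < n) :
    prodProb P₂ {ω : Fin n → α |
        kl (tilt P₁ P₂ l) P₂ - kl (tilt P₁ P₂ l) P₁ ≤ S1 P₁ P₂ n ω / n}
      ≤ exp (-(n * kl (tilt P₁ P₂ l) P₂)) := by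
  set D₁ := kl (tilt P₁ P₂ l) P₁
  set D₂ := kl (tilt P₁ P₂ l) P₂
  set Z := ∑ a, P₁ a ^ (1 - l) * P₂ a ^ l
  have hZ : 0 < Z := sum_rpow_one_sub_mul_rpow_pos h1 h2 l
  have hset : {ω : Fin n → α | D₂ - D₁ ≤ S1 P₁ P₂ n ω / n}
      = {ω | n * (D₂ - D₁) ≤ ∑ i, log (P₁ (ω i) / P₂ (ω i))} := by
    ext ω
    rw [Set.mem_ofPred_eq, Set.mem_ofPred_eq, S1_of_fin_self, le_div_iff₀ (Nat.cast_pos.2 hn),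
      mul_comm]
  have hmgf : ∑ x, P₂ x * exp ((1 - l) * log (P₁ x / P₂ x)) = Z :=
    Finset.sum_congr rfl fun x _ => by
      rw [← rpow_one_sub_mul_rpow_eq_mul_exp (h2 x) (h1 x), sub_sub_cancel, mul_comm]
  rw [hset]
  calc _ ≤ exp (-((1 - l) * (n * (D₂ - D₁))))
          * (∑ x, P₂ x * exp ((1 - l) * log (P₁ x / P₂ x))) ^ n :=
        prodProb_sum_ge_le_exp_mul_mgf_pow (fun x => (h2 x).le) _ (sub_nonneg.2 hl) n _
    _ = exp (-(n * D₂)) := by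
        rw [hmgf, ← exp_log hZ, ← exp_nat_mul, ← exp_add]
        congr 1
        linear_combination (n : ℝ) * one_sub_mul_kl_tilt_add_mul_kl_tilt h1 h2 l

end LikelihoodRatioTest

theorem rejection_test_bounds_general (P₁ P₂ : 𝒳 → ℝ)
    (h1pos : ∀ x, 0 < P₁ x) (h2pos : ∀ x, 0 < P₂ x)
    (γ : ℝ)
    (l₁ l₂ : ℝ)
    (hl₁ : l₁ ∈ Set.Icc (0:ℝ) 1) (hl₂ : l₂ ∈ Set.Icc (0:ℝ) 1)
    (hg1 : kl (tilt P₁ P₂ l₁) P₂ = γ) (hg2 : kl (tilt P₁ P₂ l₂) P₁ = γ) :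
    ∀ n : ℕ, 1 ≤ n →
      prodProb P₁ {ω : Fin n → 𝒳 | S1 P₁ P₂ n ω / n ≤
          kl (tilt P₁ P₂ l₁) P₂ - kl (tilt P₁ P₂ l₁) P₁}
        ≤ Real.exp (-((n : ℝ) * kl (tilt P₁ P₂ l₁) P₁)) ∧
      prodProb P₂ {ω : Fin n → 𝒳 |
          kl (tilt P₁ P₂ l₂) P₂ - kl (tilt P₁ P₂ l₂) P₁ ≤ S1 P₁ P₂ n ω / n}
        ≤ Real.exp (-((n : ℝ) * kl (tilt P₁ P₂ l₂) P₂)) ∧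
      prodProb P₁ {ω : Fin n → 𝒳 |
          kl (tilt P₁ P₂ l₁) P₂ - kl (tilt P₁ P₂ l₁) P₁ < S1 P₁ P₂ n ω / n ∧
          S1 P₁ P₂ n ω / n < kl (tilt P₁ P₂ l₂) P₂ - kl (tilt P₁ P₂ l₂) P₁}
        ≤ Real.exp (-(γ * n)) ∧
      prodProb P₂ {ω : Fin n → 𝒳 |
          kl (tilt P₁ P₂ l₁) P₂ - kl (tilt P₁ P₂ l₁) P₁ < S1 P₁ P₂ n ω / n ∧
          S1 P₁ P₂ n ω / n < kl (tilt P₁ P₂ l₂) P₂ - kl (tilt P₁ P₂ l₂) P₁}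
        ≤ Real.exp (-(γ * n)) := by
  intro n hn
  refine ⟨prodProb_S1_div_le_le_exp_neg_kl_tilt h1pos h2pos hl₁.1 hn,
    prodProb_le_S1_div_le_exp_neg_kl_tilt h1pos h2pos hl₂.2 hn, ?_, ?_⟩
  · calc _ ≤ _ := prodProb_mono (fun x => (h1pos x).le) fun ω hω => hω.2.le
      _ ≤ _ := prodProb_S1_div_le_le_exp_neg_kl_tilt h1pos h2pos hl₂.1 hn
      _ = _ := by rw [hg2, mul_comm]
  · calc _ ≤ _ := prodProb_mono (fun x => (h2pos x).le) fun ω hω => hω.1.le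
      _ ≤ _ := prodProb_le_S1_div_le_exp_neg_kl_tilt h1pos h2pos hl₁.2 hn
      _ = _ := by rw [hg1, mul_comm]

/-- Error and rejection bounds for the fixed-length log-likelihood-ratio test with
rejection, with thresholds `α = α(l₂)` and `β = α(l₁)`:
`P₁(A₂^n) ≤ e^{−nD(P^(l₁)‖P₁)}`, `P₂(A₁^n) ≤ e^{−nD(P^(l₂)‖P₂)}`, and
`P_i(A_Ω^n) ≤ e^{−γn}` for `i = 1, 2`. -/
theorem rejection_test_bounds (P₁ P₂ : 𝒳 → ℝ)
    (h1pos : ∀ x, 0 < P₁ x) (h2pos : ∀ x, 0 < P₂ x)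
    (h1sum : ∑ x, P₁ x = 1) (h2sum : ∑ x, P₂ x = 1)
    (hne : P₁ ≠ P₂)
    (ls : ℝ) (hls : ls ∈ Set.Icc (0:ℝ) 1)
    (hchern : kl (tilt P₁ P₂ ls) P₁ = kl (tilt P₁ P₂ ls) P₂)
    (γ : ℝ) (hγ0 : 0 < γ) (hγD : γ ≤ kl (tilt P₁ P₂ ls) P₁)
    (l₁ l₂ : ℝ)
    (hl₁ : l₁ ∈ Set.Icc (0:ℝ) 1) (hl₂ : l₂ ∈ Set.Icc (0:ℝ) 1)
    (hg1 : kl (tilt P₁ P₂ l₁) P₂ = γ) (hg2 : kl (tilt P₁ P₂ l₂) P₁ = γ) :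
    ∀ n : ℕ, 1 ≤ n →
      prodProb P₁ {ω : Fin n → 𝒳 | S1 P₁ P₂ n ω / n ≤
          kl (tilt P₁ P₂ l₁) P₂ - kl (tilt P₁ P₂ l₁) P₁}
        ≤ Real.exp (-((n : ℝ) * kl (tilt P₁ P₂ l₁) P₁)) ∧
      prodProb P₂ {ω : Fin n → 𝒳 |
          kl (tilt P₁ P₂ l₂) P₂ - kl (tilt P₁ P₂ l₂) P₁ ≤ S1 P₁ P₂ n ω / n}
        ≤ Real.exp (-((n : ℝ) * kl (tilt P₁ P₂ l₂) P₂)) ∧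
      prodProb P₁ {ω : Fin n → 𝒳 |
          kl (tilt P₁ P₂ l₁) P₂ - kl (tilt P₁ P₂ l₁) P₁ < S1 P₁ P₂ n ω / n ∧
          S1 P₁ P₂ n ω / n < kl (tilt P₁ P₂ l₂) P₂ - kl (tilt P₁ P₂ l₂) P₁}
        ≤ Real.exp (-(γ * n)) ∧
      prodProb P₂ {ω : Fin n → 𝒳 |
          kl (tilt P₁ P₂ l₁) P₂ - kl (tilt P₁ P₂ l₁) P₁ < S1 P₁ P₂ n ω / n ∧
          S1 P₁ P₂ n ω / n < kl (tilt P₁ P₂ l₂) P₂ - kl (tilt P₁ P₂ l₂) P₁}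
        ≤ Real.exp (-(γ * n)) :=
  rejection_test_bounds_general P₁ P₂ h1pos h2pos γ l₁ l₂ hl₁ hl₂ hg1 hg2
end

section
/- The map λ ↦ D(P^(λ)‖P₁) is continuous and strictly increasing on [0,1], with value 0 at λ = 0 and D(P₂‖P₁) at λ = 1; the map λ ↦ D(P^(λ)‖P₂) is continuous and strictly decreasing on [0,1], with value D(P₁‖P₂) at λ = 0 and 0 at λ = 1. Consequently there exists a unique λ* ∈ (0,1) with D(P^(λ*)‖P₁) = D(P^(λ*)‖P₂), and the Chernoff exponent D* = D(P^(λ*)‖P₁) is strictly positive. -/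
open Real Filter Finset MeasureTheory
open scoped Classical

variable {𝒳 : Type*} [Fintype 𝒳] [DecidableEq 𝒳] [Nonempty 𝒳]

/-! With `T = log (P₂ / P₁)` the tilted distributions form the exponential family
`P^(λ) ∝ P₁ e^{λ T}`, which passes through `P₁` at `λ = 0` and `P₂` at `λ = 1`. Within such a
family `D(P^(λ)‖P^(c)) = (λ - c) E_λ[T] - log Z(λ) + log Z(c)`, and since `(log Z)' = E_λ[T]`
its derivative in `λ` is `(λ - c) Var_λ(T)`. The variance is positive because `T` is not
constant when `P₁ ≠ P₂`, so `D(P^(λ)‖P₁)` increases and `D(P^(λ)‖P₂)` decreases on `[0,1]`;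
their difference runs from `-D(P₁‖P₂) < 0` to `D(P₂‖P₁) > 0` and vanishes exactly once. -/

theorem existsUnique_eq_of_strictMonoOn_of_strictAntiOn {f g : ℝ → ℝ} {a b : ℝ} (hab : a ≤ b)
    (hfc : ContinuousOn f (Set.Icc a b)) (hgc : ContinuousOn g (Set.Icc a b))
    (hf : StrictMonoOn f (Set.Icc a b)) (hg : StrictAntiOn g (Set.Icc a b))
    (ha : f a < g a) (hb : g b < f b) : ∃! c, c ∈ Set.Ioo a b ∧ f c = g c := by
  have hmono : StrictMonoOn (f - g) (Set.Icc a b) := fun x hx y hy hxy =>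
    sub_lt_sub (hf hx hy hxy) (hg hx hy hxy)
  obtain ⟨c, hc, hfgc⟩ := intermediate_value_Ioo hab (hfc.sub hgc) ⟨sub_neg.2 ha, sub_pos.2 hb⟩
  refine ⟨c, ⟨hc, sub_eq_zero.1 hfgc⟩, fun d ⟨hd, hfgd⟩ => hmono.injOn
    (Set.Ioo_subset_Icc_self hd) (Set.Ioo_subset_Icc_self hc) ?_⟩
  rw [hfgc, Pi.sub_apply, hfgd, sub_self]

section ExponentialFamily

variable {ι : Type*} [Fintype ι]

theorem sq_sum_mul_lt_sum_mul_sq_mul_sum {w T : ι → ℝ} (hw : ∀ x, 0 < w x) {x₀ y₀ : ι}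
    (hT : T x₀ ≠ T y₀) : (∑ x, w x * T x) ^ 2 < (∑ x, w x * T x ^ 2) * ∑ x, w x := by
  have lagrange : ∑ x, ∑ y, w x * w y * (T x - T y) ^ 2 =
      2 * ((∑ x, w x * T x ^ 2) * ∑ x, w x - (∑ x, w x * T x) ^ 2) := by
    have expand : ∀ x y, w x * w y * (T x - T y) ^ 2 =
        w x * T x ^ 2 * w y + w x * (w y * T y ^ 2) - 2 * (w x * T x) * (w y * T y) := by
      intro x y; ring
    simp only [expand, Finset.sum_add_distrib, Finset.sum_sub_distrib, ← Finset.mul_sum,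
      ← Finset.sum_mul]
    ring
  have term_nonneg : ∀ x y, 0 ≤ w x * w y * (T x - T y) ^ 2 := fun x y => by
    have := hw x; have := hw y; positivity
  have pos : 0 < ∑ x, ∑ y, w x * w y * (T x - T y) ^ 2 :=
    Finset.sum_pos' (fun x _ => Finset.sum_nonneg fun y _ => term_nonneg x y)
      ⟨x₀, Finset.mem_univ _, Finset.sum_pos' (fun y _ => term_nonneg x₀ y)
        ⟨y₀, Finset.mem_univ _, by
          have := sub_ne_zero.2 hT; have := hw x₀; have := hw y₀; positivity⟩⟩
  linarith

/-- `expMoment w T n` is the `n`-th derivative of the partition function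
`Z(l) = ∑ x, w x * exp (l * T x)`. -/
noncomputable def expMoment (w T : ι → ℝ) (n : ℕ) (l : ℝ) : ℝ :=
  ∑ x, w x * T x ^ n * exp (l * T x)

noncomputable def expFamily (w T : ι → ℝ) (l : ℝ) (x : ι) : ℝ :=
  w x * exp (l * T x) / expMoment w T 0 l

noncomputable def tiltedMean (w T : ι → ℝ) (l : ℝ) : ℝ :=
  expMoment w T 1 l / expMoment w T 0 l

noncomputable def tiltedVariance (w T : ι → ℝ) (l : ℝ) : ℝ :=
  (expMoment w T 2 l * expMoment w T 0 l - expMoment w T 1 l ^ 2) / expMoment w T 0 l ^ 2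

variable {w T : ι → ℝ}

theorem hasDerivAt_expMoment (w T : ι → ℝ) (n : ℕ) (l : ℝ) :
    HasDerivAt (expMoment w T n) (expMoment w T (n + 1) l) l :=
  HasDerivAt.fun_sum fun x _ =>
    ((hasDerivAt_mul_const (T x)).exp.const_mul (w x * T x ^ n)).congr_deriv (by ring)

theorem expMoment_zero_pos [Nonempty ι] (hw : ∀ x, 0 < w x) (l : ℝ) :
    0 < expMoment w T 0 l :=
  Finset.sum_pos (fun x _ => by have := hw x; positivity) Finset.univ_nonempty

theorem sum_expFamily [Nonempty ι] (hw : ∀ x, 0 < w x) (l : ℝ) :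
    ∑ x, expFamily w T l x = 1 := by
  simp only [expFamily, ← Finset.sum_div]
  convert div_self (expMoment_zero_pos (T := T) hw l).ne' using 2
  simp [expMoment]

theorem sum_expFamily_mul (w T : ι → ℝ) (l : ℝ) :
    ∑ x, expFamily w T l x * T x = tiltedMean w T l := by
  simp only [expFamily, tiltedMean, expMoment, Finset.sum_div, pow_one]
  exact Finset.sum_congr rfl fun x _ => by ring

theorem log_expFamily_div [Nonempty ι] (hw : ∀ x, 0 < w x) (l c : ℝ) (x : ι) :
    log (expFamily w T l x / expFamily w T c x) =
      (l - c) * T x - log (expMoment w T 0 l) + log (expMoment w T 0 c) := by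
  have hZl := expMoment_zero_pos (T := T) hw l
  have hZc := expMoment_zero_pos (T := T) hw c
  have hratio : expFamily w T l x / expFamily w T c x =
      exp ((l - c) * T x) * expMoment w T 0 c / expMoment w T 0 l := by
    simp only [expFamily, sub_mul, exp_sub]
    field_simp [(hw x).ne']
  rw [hratio, log_div (by positivity) hZl.ne', log_mul (exp_pos _).ne' hZc.ne', log_exp]
  ring

theorem kl_expFamily [Nonempty ι] (hw : ∀ x, 0 < w x) (l c : ℝ) :
    kl (expFamily w T l) (expFamily w T c) =
      (l - c) * tiltedMean w T l - log (expMoment w T 0 l) + log (expMoment w T 0 c) := by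
  simp only [kl, log_expFamily_div hw, mul_add, mul_sub, Finset.sum_add_distrib,
    Finset.sum_sub_distrib, ← Finset.sum_mul, mul_left_comm _ (l - c), ← Finset.mul_sum,
    sum_expFamily_mul, sum_expFamily hw, one_mul]

theorem hasDerivAt_tiltedMean [Nonempty ι] (hw : ∀ x, 0 < w x) (l : ℝ) :
    HasDerivAt (tiltedMean w T) (tiltedVariance w T l) l :=
  ((hasDerivAt_expMoment w T 1 l).div (hasDerivAt_expMoment w T 0 l)
    (expMoment_zero_pos hw l).ne').congr_deriv (by simp only [tiltedVariance]; ring)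

theorem tiltedVariance_pos (hw : ∀ x, 0 < w x) {x₀ y₀ : ι} (hT : T x₀ ≠ T y₀) (l : ℝ) :
    0 < tiltedVariance w T l := by
  have : Nonempty ι := ⟨x₀⟩
  have hCS : expMoment w T 1 l ^ 2 < expMoment w T 2 l * expMoment w T 0 l := by
    simpa only [expMoment, pow_zero, pow_one, mul_one, mul_right_comm (w _)] using
      sq_sum_mul_lt_sum_mul_sq_mul_sum (fun x => mul_pos (hw x) (exp_pos (l * T x))) hT
  exact div_pos (sub_pos.2 hCS) (pow_pos (expMoment_zero_pos hw l) 2)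

theorem hasDerivAt_kl_expFamily [Nonempty ι] (hw : ∀ x, 0 < w x) (c l : ℝ) :
    HasDerivAt (fun l => kl (expFamily w T l) (expFamily w T c))
      ((l - c) * tiltedVariance w T l) l := by
  simp only [kl_expFamily hw]
  have hlogZ := (hasDerivAt_expMoment w T 0 l).log (expMoment_zero_pos hw l).ne'
  refine ((((hasDerivAt_id l).sub_const c).mul (hasDerivAt_tiltedMean hw l)).sub hlogZ).add_const
    _ |>.congr_deriv ?_
  simp only [tiltedMean, id_eq, zero_add]
  ring

theorem continuous_kl_expFamily [Nonempty ι] (hw : ∀ x, 0 < w x) (c : ℝ) :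
    Continuous fun l => kl (expFamily w T l) (expFamily w T c) :=
  continuous_iff_continuousAt.2 fun l => (hasDerivAt_kl_expFamily hw c l).continuousAt

theorem strictMonoOn_kl_expFamily (hw : ∀ x, 0 < w x) {x₀ y₀ : ι} (hT : T x₀ ≠ T y₀)
    (c : ℝ) : StrictMonoOn (fun l => kl (expFamily w T l) (expFamily w T c)) (Set.Ici c) := by
  have : Nonempty ι := ⟨x₀⟩
  refine strictMonoOn_of_deriv_pos (convex_Ici c) (continuous_kl_expFamily hw c).continuousOn
    fun l hl => ?_
  rw [interior_Ici, Set.mem_Ioi] at hl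
  rw [(hasDerivAt_kl_expFamily hw c l).deriv]
  exact mul_pos (sub_pos.2 hl) (tiltedVariance_pos hw hT l)

theorem strictAntiOn_kl_expFamily (hw : ∀ x, 0 < w x) {x₀ y₀ : ι} (hT : T x₀ ≠ T y₀)
    (c : ℝ) : StrictAntiOn (fun l => kl (expFamily w T l) (expFamily w T c)) (Set.Iic c) := by
  have : Nonempty ι := ⟨x₀⟩
  refine strictAntiOn_of_deriv_neg (convex_Iic c) (continuous_kl_expFamily hw c).continuousOn
    fun l hl => ?_
  rw [interior_Iic, Set.mem_Iio] at hl
  rw [(hasDerivAt_kl_expFamily hw c l).deriv]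
  exact mul_neg_of_neg_of_pos (sub_neg.2 hl) (tiltedVariance_pos hw hT l)

end ExponentialFamily

section Tilt

variable {ι : Type*} [Fintype ι]

theorem kl_self (Q : ι → ℝ) : kl Q Q = 0 :=
  Finset.sum_eq_zero fun x _ => by
    rcases eq_or_ne (Q x) 0 with hQ | hQ <;> simp [hQ]

theorem tilt_zero {P₁ : ι → ℝ} (P₂ : ι → ℝ) (h1sum : ∑ x, P₁ x = 1) : tilt P₁ P₂ 0 = P₁ := by
  funext x; simp [tilt, h1sum]

theorem tilt_one (P₁ : ι → ℝ) {P₂ : ι → ℝ} (h2sum : ∑ x, P₂ x = 1) : tilt P₁ P₂ 1 = P₂ := by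
  funext x; simp [tilt, h2sum]

theorem tilt_eq_expFamily {P₁ P₂ : ι → ℝ} (h1 : ∀ x, 0 < P₁ x) (h2 : ∀ x, 0 < P₂ x) :
    tilt P₁ P₂ = expFamily P₁ fun x => log (P₂ x / P₁ x) := by
  have hpow : ∀ l x, P₁ x ^ (1 - l) * P₂ x ^ l = P₁ x * exp (l * log (P₂ x / P₁ x)) := by
    intro l x
    rw [rpow_def_of_pos (h1 x), rpow_def_of_pos (h2 x), ← exp_add, log_div (h2 x).ne' (h1 x).ne',
      show log (P₁ x) * (1 - l) + log (P₂ x) * l = log (P₁ x) + l * (log (P₂ x) - log (P₁ x)) by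
        ring, exp_add, exp_log (h1 x)]
  funext l x
  simp only [tilt, expFamily, expMoment, hpow, pow_zero, mul_one]

theorem exists_log_div_ne {P₁ P₂ : ι → ℝ} (h1 : ∀ x, 0 < P₁ x) (h2 : ∀ x, 0 < P₂ x)
    (h1sum : ∑ x, P₁ x = 1) (h2sum : ∑ x, P₂ x = 1) (hne : P₁ ≠ P₂) :
    ∃ x y, log (P₂ x / P₁ x) ≠ log (P₂ y / P₁ y) := by
  obtain ⟨z, hz⟩ := Function.ne_iff.1 hne
  obtain ⟨x, -, hx⟩ := Finset.exists_pos_of_sum_zero_of_exists_nonzero (s := Finset.univ)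
    (fun x => P₂ x - P₁ x) (by simp [h1sum, h2sum]) ⟨z, Finset.mem_univ _, sub_ne_zero.2 hz.symm⟩
  obtain ⟨y, -, hy⟩ := Finset.exists_pos_of_sum_zero_of_exists_nonzero (s := Finset.univ)
    (fun x => P₁ x - P₂ x) (by simp [h1sum, h2sum]) ⟨z, Finset.mem_univ _, sub_ne_zero.2 hz⟩
  refine ⟨x, y, ne_of_gt (lt_trans (log_neg (div_pos (h2 y) (h1 y)) ?_) (log_pos ?_))⟩
  · exact (div_lt_one (h1 y)).2 (sub_pos.1 hy)
  · exact (one_lt_div (h1 x)).2 (sub_pos.1 hx)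

end Tilt

/-- Monotonicity/continuity of `λ ↦ D(P^(λ)‖P_i)`, boundary values, and existence of a
unique `λ* ∈ (0,1)` with `D(P^(λ*)‖P₁) = D(P^(λ*)‖P₂)`, at which the common value
(the Chernoff exponent `D*`) is strictly positive. -/
theorem tilted_kl_monotone_and_chernoff (P₁ P₂ : 𝒳 → ℝ)
    (h1pos : ∀ x, 0 < P₁ x) (h2pos : ∀ x, 0 < P₂ x)
    (h1sum : ∑ x, P₁ x = 1) (h2sum : ∑ x, P₂ x = 1)
    (hne : P₁ ≠ P₂) :
    ContinuousOn (fun l => kl (tilt P₁ P₂ l) P₁) (Set.Icc 0 1) ∧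
    StrictMonoOn (fun l => kl (tilt P₁ P₂ l) P₁) (Set.Icc 0 1) ∧
    kl (tilt P₁ P₂ 0) P₁ = 0 ∧
    kl (tilt P₁ P₂ 1) P₁ = kl P₂ P₁ ∧
    ContinuousOn (fun l => kl (tilt P₁ P₂ l) P₂) (Set.Icc 0 1) ∧
    StrictAntiOn (fun l => kl (tilt P₁ P₂ l) P₂) (Set.Icc 0 1) ∧
    kl (tilt P₁ P₂ 0) P₂ = kl P₁ P₂ ∧
    kl (tilt P₁ P₂ 1) P₂ = 0 ∧
    (∃! ls : ℝ, ls ∈ Set.Ioo (0:ℝ) 1 ∧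
      kl (tilt P₁ P₂ ls) P₁ = kl (tilt P₁ P₂ ls) P₂) ∧
    (∀ ls ∈ Set.Ioo (0:ℝ) 1,
      kl (tilt P₁ P₂ ls) P₁ = kl (tilt P₁ P₂ ls) P₂ → 0 < kl (tilt P₁ P₂ ls) P₁) := by
  set T : 𝒳 → ℝ := fun x => log (P₂ x / P₁ x)
  obtain ⟨x₀, y₀, hT⟩ : ∃ x y, T x ≠ T y := exists_log_div_ne h1pos h2pos h1sum h2sum hne
  have htilt : tilt P₁ P₂ = expFamily P₁ T := tilt_eq_expFamily h1pos h2pos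
  have hf : (fun l => kl (tilt P₁ P₂ l) P₁) =
      fun l => kl (expFamily P₁ T l) (expFamily P₁ T 0) := by
    rw [← htilt, tilt_zero P₂ h1sum]
  have hg : (fun l => kl (tilt P₁ P₂ l) P₂) =
      fun l => kl (expFamily P₁ T l) (expFamily P₁ T 1) := by
    rw [← htilt, tilt_one P₁ h2sum]
  have fcont : ContinuousOn (fun l => kl (tilt P₁ P₂ l) P₁) (Set.Icc 0 1) :=
    hf ▸ (continuous_kl_expFamily h1pos 0).continuousOn
  have gcont : ContinuousOn (fun l => kl (tilt P₁ P₂ l) P₂) (Set.Icc 0 1) :=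
    hg ▸ (continuous_kl_expFamily h1pos 1).continuousOn
  have fmono : StrictMonoOn (fun l => kl (tilt P₁ P₂ l) P₁) (Set.Icc 0 1) :=
    hf ▸ (strictMonoOn_kl_expFamily h1pos hT 0).mono Set.Icc_subset_Ici_self
  have ganti : StrictAntiOn (fun l => kl (tilt P₁ P₂ l) P₂) (Set.Icc 0 1) :=
    hg ▸ (strictAntiOn_kl_expFamily h1pos hT 1).mono Set.Icc_subset_Iic_self
  have f0 : kl (tilt P₁ P₂ 0) P₁ = 0 := by rw [tilt_zero P₂ h1sum, kl_self]
  have g1 : kl (tilt P₁ P₂ 1) P₂ = 0 := by rw [tilt_one P₁ h2sum, kl_self]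
  have zero_mem : (0 : ℝ) ∈ Set.Icc 0 1 := Set.left_mem_Icc.2 zero_le_one
  have one_mem : (1 : ℝ) ∈ Set.Icc 0 1 := Set.right_mem_Icc.2 zero_le_one
  refine ⟨fcont, fmono, f0, by rw [tilt_one P₁ h2sum], gcont, ganti, by rw [tilt_zero P₂ h1sum],
    g1, existsUnique_eq_of_strictMonoOn_of_strictAntiOn zero_le_one fcont gcont fmono ganti ?_ ?_,
    fun l hl _ => f0 ▸ fmono zero_mem (Set.Ioo_subset_Icc_self hl) hl.1⟩
  · exact f0.trans_lt (g1.symm.trans_lt (ganti zero_mem one_mem zero_lt_one))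
  · exact g1.trans_lt (f0.symm.trans_lt (fmono zero_mem one_mem zero_lt_one))
end
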